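/- Suppose the generator L satisfies the 1-logSob inequality with constant C > 0. Let a, b ≥ 0, t > 0, and let A, B ⊆ Ω with μ(A) = exp(−a²/2) and μ(B) = exp(−b²/2). Then E[1_A · T_t 1_B] ≥ exp( −(1/2) · (a² + 2 e^{−2t/C} a b + b²) / (1 − e^{−4t/C}) ). (Probabilistically: if (X_s) is the reversible Markov chain with semigroup (T_s) started from the stationary measure μ, then P(X_0 ∈ A, X_t ∈ B) is bounded below by this quantity.) -/

import Mathlib

open Real Finset

noncomputable section

variable {Ω : Type*}

/-- Expectation `E f = ∑ ω, μ ω * f ω`. -/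
def pexp [Fintype Ω] (μ : Ω → ℝ) (f : Ω → ℝ) : ℝ := ∑ ω, μ ω * f ω

/-- Dirichlet form `𝓔(f,g) = E[f · L g]`. -/
def dform [Fintype Ω] (μ : Ω → ℝ) (L : (Ω → ℝ) →ₗ[ℝ] (Ω → ℝ)) (f g : Ω → ℝ) : ℝ :=
  pexp μ fun ω => f ω * L g ω

/-- Entropy `Ent(f) = E[f log f] − (E f) log (E f)`. -/
def entE [Fintype Ω] (μ : Ω → ℝ) (f : Ω → ℝ) : ℝ :=
  pexp μ (fun ω => f ω * Real.log (f ω)) - pexp μ f * Real.log (pexp μ f)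

/-- Variance `Var(f) = E[f²] − (E f)²`. -/
def varE [Fintype Ω] (μ : Ω → ℝ) (f : Ω → ℝ) : ℝ :=
  pexp μ (fun ω => f ω ^ 2) - (pexp μ f) ^ 2

/-- The structural conditions on the Markov generator `L`: `L 1 = 0`, self-adjointness,
positive semidefiniteness, and nonnegativity of `L f` at a global maximum point of `f`. -/
def IsGen [Fintype Ω] (μ : Ω → ℝ) (L : (Ω → ℝ) →ₗ[ℝ] (Ω → ℝ)) : Prop :=
  L (fun _ => 1) = 0 ∧
  (∀ f g, pexp μ (fun ω => f ω * L g ω) = pexp μ (fun ω => g ω * L f ω)) ∧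
  (∀ f, 0 ≤ pexp μ (fun ω => f ω * L f ω)) ∧
  (∀ (f : Ω → ℝ) (ω : Ω), (∀ x, f x ≤ f ω) → 0 ≤ L f ω)

/-- The `p`-logSob inequality with constant `C` (with the conventions for `p = 0` and `p = 1`). -/
def LogSob [Fintype Ω] (μ : Ω → ℝ) (L : (Ω → ℝ) →ₗ[ℝ] (Ω → ℝ)) (p C : ℝ) : Prop :=
  if p = 0 then
    ∀ f : Ω → ℝ, (∀ ω, 0 < f ω) →
      varE μ (fun ω => Real.log (f ω)) ≤ -(C / 2) * dform μ L f (fun ω => (f ω)⁻¹)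
  else if p = 1 then
    ∀ f : Ω → ℝ, (∀ ω, 0 < f ω) →
      entE μ f ≤ C / 4 * dform μ L f (fun ω => Real.log (f ω))
  else
    ∀ f : Ω → ℝ, (∀ ω, 0 < f ω) →
      entE μ (fun ω => f ω ^ p) ≤
        C * p ^ 2 / (4 * (p - 1)) * dform μ L (fun ω => f ω ^ (p - 1)) f

/-- Markov semigroup `T t = e^{-tL}`. -/
def heat [Fintype Ω] (L : (Ω → ℝ) →ₗ[ℝ] (Ω → ℝ)) (t : ℝ) (f : Ω → ℝ) : Ω → ℝ :=
  NormedSpace.exp ((-t) • (LinearMap.toContinuousLinearMap L)) f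

/-- `‖f‖_p` for positive `f` and arbitrary real `p`, with `‖f‖_0 = exp (E log f)`. -/
def pnorm [Fintype Ω] (μ : Ω → ℝ) (p : ℝ) (f : Ω → ℝ) : ℝ :=
  if p = 0 then Real.exp (pexp μ fun ω => Real.log (f ω))
  else (pexp μ fun ω => f ω ^ p) ^ (1 / p)

/-- `‖f‖_p = (E |f|^p)^{1/p}` for real-valued `f`. -/
def pnormAbs [Fintype Ω] (μ : Ω → ℝ) (p : ℝ) (f : Ω → ℝ) : ℝ :=
  (pexp μ fun ω => |f ω| ^ p) ^ (1 / p)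

/-- Hölder conjugate `p' = p/(p-1)`, with the convention `0' = 0`. -/
def hconj (p : ℝ) : ℝ := if p = 0 then 0 else p / (p - 1)

/-- The simple generator `L = Id − E`. -/
def simpleL [Fintype Ω] (μ : Ω → ℝ) : (Ω → ℝ) →ₗ[ℝ] (Ω → ℝ) where
  toFun f := fun ω => f ω - pexp μ f
  map_add' f g := by
    funext ω
    simp only [Pi.add_apply, pexp, mul_add, Finset.sum_add_distrib]
    ring
  map_smul' c f := by
    funext ω
    simp only [Pi.smul_apply, smul_eq_mul, pexp, RingHom.id_apply]
    rw [mul_sub, Finset.mul_sum]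
    congr 1
    exact Finset.sum_congr rfl fun x _ => by ring

/-!
The 1-logSob inequality implies the `p`-logSob inequality for every `p < 1`, `p ≠ 0`, by comparing
the two Dirichlet forms edge by edge (an instance of Chebyshev's integral inequality). Gross's
differentiation argument then shows that `s ↦ log ‖T_s g‖_{Q(s)}` is nondecreasing along the curve
`1 - Q(s) = (1 - p) e^{4s/C}` as long as `Q(s) ≠ 0`. The exponent has to cross `0`: flow to `δ`,
jump to `-δ` at a cost `O(δ)`, and let `δ → 0`. This gives reverse hypercontractivity
`‖T_t g‖_{q/(q-1)} ≥ ‖g‖_p` for `0 < p, q < 1` with `(1 - p)(1 - q) = e^{-4t/C}`, and the reverse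
Hölder inequality turns it into `E[f T_t g] ≥ ‖f‖_q ‖g‖_p`. For `f = 1_A`, `g = 1_B` (approximated
by `1_A + ε`, `1_B + ε`) this reads `E[1_A T_t 1_B] ≥ μ(A)^{1/q} μ(B)^{1/p}`, and the stated bound
is the optimum over `p` and `q`.
-/

open Filter Topology intervalIntegral

theorem integral_mul_le_of_monotone_of_antitone {f g : ℝ → ℝ} (hfc : Continuous f)
    (hgc : Continuous g) (hf : Monotone f) (hg : Antitone g) {a b : ℝ} (hab : a ≤ b) :
    (b - a) * ∫ s in a..b, f s * g s ≤ (∫ s in a..b, f s) * ∫ s in a..b, g s := by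
  have hi : ∀ {φ : ℝ → ℝ}, Continuous φ → IntervalIntegrable φ MeasureTheory.volume a b :=
    fun h => h.intervalIntegrable _ _
  have inner : ∀ s, ∫ u in a..b, (f s - f u) * (g u - g s) =
      f s * (∫ u in a..b, g u) + g s * (∫ u in a..b, f u)
        - (b - a) * (f s * g s) - ∫ u in a..b, f u * g u := by
    intro s
    have e : (fun u => (f s - f u) * (g u - g s)) =
        fun u => f s * g u + g s * f u - f s * g s - f u * g u := by
      funext u; ring
    rw [e, integral_sub (hi (by fun_prop)) (hi (by fun_prop)),
      integral_sub (hi (by fun_prop)) (by simp), integral_add (hi (by fun_prop)) (hi (by fun_prop)),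
      integral_const_mul, integral_const_mul, integral_const, smul_eq_mul]
  have hnonneg : 0 ≤ ∫ s in a..b, ∫ u in a..b, (f s - f u) * (g u - g s) := by
    refine integral_nonneg hab fun s _ => integral_nonneg hab fun u _ => ?_
    rcases le_total u s with h | h
    · exact mul_nonneg (sub_nonneg.2 (hf h)) (sub_nonneg.2 (hg h))
    · exact mul_nonneg_of_nonpos_of_nonpos (sub_nonpos.2 (hf h)) (sub_nonpos.2 (hg h))
  simp_rw [inner] at hnonneg
  rw [integral_sub (hi (by fun_prop)) (by simp), integral_sub (hi (by fun_prop)) (hi (by fun_prop)),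
    integral_add (hi (by fun_prop)) (hi (by fun_prop)), integral_mul_const, integral_mul_const,
    integral_const_mul, integral_const, smul_eq_mul] at hnonneg
  linarith

theorem integral_exp_const_mul {c : ℝ} (hc : c ≠ 0) (a b : ℝ) :
    ∫ s in a..b, exp (c * s) = (exp (c * b) - exp (c * a)) / c := by
  rw [integral_comp_mul_left (fun s => exp s) hc, integral_exp, smul_eq_mul, inv_mul_eq_div]

theorem mul_rpow_sub_mul_log_sub_le {p : ℝ} (hp0 : p ≠ 0) (hp1 : p < 1) {x y : ℝ}
    (hx : 0 < x) (hy : 0 < y) :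
    p * ((x ^ p - y ^ p) * (log x - log y)) ≤
      p ^ 2 / (p - 1) * ((x ^ (p - 1) - y ^ (p - 1)) * (x - y)) := by
  wlog hyx : y ≤ x generalizing x y
  · convert this hy hx (le_of_not_ge hyx) using 1 <;> ring
  have hp1' : p - 1 ≠ 0 := by linarith
  have cheb := integral_mul_le_of_monotone_of_antitone continuous_exp
    (continuous_exp.comp (continuous_const_mul (p - 1))) exp_monotone
    (fun s u h => exp_le_exp.2 (mul_le_mul_of_nonpos_left h (by linarith)))
    (log_le_log hy hyx)
  have hprod : ∀ s, exp s * exp ((p - 1) * s) = exp (p * s) := fun s => by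
    rw [← exp_add]; ring_nf
  simp only [Function.comp_apply, hprod] at cheb
  rw [integral_exp, integral_exp_const_mul hp0, integral_exp_const_mul hp1', exp_log hx,
    exp_log hy] at cheb
  simp only [rpow_def_of_pos hx, rpow_def_of_pos hy, mul_comm (log _)]
  calc p * ((exp (p * log x) - exp (p * log y)) * (log x - log y))
      = p ^ 2 * ((log x - log y) * ((exp (p * log x) - exp (p * log y)) / p)) := by
        field_simp
    _ ≤ p ^ 2 * ((x - y) * ((exp ((p - 1) * log x) - exp ((p - 1) * log y)) / (p - 1))) :=
        mul_le_mul_of_nonneg_left cheb (sq_nonneg p)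
    _ = _ := by ring

section Expectation

variable [Fintype Ω] {μ : Ω → ℝ}

theorem pexp_add (f g : Ω → ℝ) : pexp μ (fun ω => f ω + g ω) = pexp μ f + pexp μ g := by
  simp only [pexp, mul_add, sum_add_distrib]

theorem pexp_const_mul (c : ℝ) (f : Ω → ℝ) : pexp μ (fun ω => c * f ω) = c * pexp μ f := by
  simp only [pexp, mul_sum, mul_left_comm]

theorem nonempty_of_sum_eq_one (hμ1 : ∑ ω, μ ω = 1) : Nonempty Ω :=
  univ_nonempty_iff.1 (nonempty_of_sum_ne_zero (hμ1 ▸ one_ne_zero))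

theorem pexp_pos [Nonempty Ω] (hμ : ∀ ω, 0 < μ ω) {f : Ω → ℝ} (hf : ∀ ω, 0 < f ω) :
    0 < pexp μ f :=
  sum_pos (fun ω _ => mul_pos (hμ ω) (hf ω)) univ_nonempty

theorem pexp_le_pexp (hμ : ∀ ω, 0 ≤ μ ω) {f g : Ω → ℝ} (h : ∀ ω, f ω ≤ g ω) :
    pexp μ f ≤ pexp μ g :=
  sum_le_sum fun ω _ => mul_le_mul_of_nonneg_left (h ω) (hμ ω)

theorem pexp_const (hμ1 : ∑ ω, μ ω = 1) (c : ℝ) : pexp μ (fun _ => c) = c := by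
  rw [pexp, ← sum_mul, hμ1, one_mul]

theorem pexp_indicator [DecidableEq Ω] (D : Finset Ω) :
    pexp μ (fun ω => if ω ∈ D then 1 else 0) = ∑ ω ∈ D, μ ω := by
  simp [pexp, sum_ite_mem]

theorem eq_univ_of_sum_eq_one (hμ : ∀ ω, 0 < μ ω) (hμ1 : ∑ ω, μ ω = 1) {D : Finset Ω}
    (hD : ∑ ω ∈ D, μ ω = 1) : D = univ := by
  by_contra h
  obtain ⟨x, -, hx⟩ := exists_of_ssubset ((subset_univ D).ssubset_of_ne h)
  have := sum_lt_sum_of_subset (subset_univ D) (mem_univ x) hx (hμ x) fun i _ _ => (hμ i).le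
  linarith

end Expectation

section Generator

variable [Fintype Ω] {μ : Ω → ℝ} {L : (Ω → ℝ) →ₗ[ℝ] (Ω → ℝ)}

theorem dform_const_mul_left (c : ℝ) (f g : Ω → ℝ) :
    dform μ L (fun ω => c * f ω) g = c * dform μ L f g := by
  simp only [dform, mul_assoc, pexp_const_mul]

theorem dform_const_mul_right (c : ℝ) (f g : Ω → ℝ) :
    dform μ L f (fun ω => c * g ω) = c * dform μ L f g := by
  have : (fun ω => c * g ω) = c • g := rfl
  simp only [dform, this, map_smul, Pi.smul_apply, smul_eq_mul, mul_left_comm (f _),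
    pexp_const_mul]

variable [DecidableEq Ω]

theorem apply_eq_sum_single (L : (Ω → ℝ) →ₗ[ℝ] (Ω → ℝ)) (h : Ω → ℝ) (ω : Ω) :
    L h ω = ∑ ω', h ω' * L (Pi.single ω' 1) ω := by
  conv_lhs => rw [← univ_sum_single h]
  rw [map_sum, Finset.sum_apply]
  refine sum_congr rfl fun ω' _ => ?_
  conv_lhs => rw [← mul_one (h ω'), ← smul_eq_mul, Pi.single_smul', map_smul]
  rfl
theorem IsGen.apply_single_nonpos (hL : IsGen μ L) {ω ω' : Ω} (h : ω ≠ ω') :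
    L (Pi.single ω' 1) ω ≤ 0 := by
  have hmax : ∀ x, (-Pi.single ω' 1 : Ω → ℝ) x ≤ (-Pi.single ω' 1 : Ω → ℝ) ω := fun x => by
    by_cases hx : x = ω' <;> simp [hx, h]
  simpa using hL.2.2.2 _ ω hmax

theorem IsGen.sum_apply_single (hL : IsGen μ L) (ω : Ω) : ∑ ω', L (Pi.single ω' 1) ω = 0 := by
  simpa using (apply_eq_sum_single L (fun _ => 1) ω).symm.trans (congrFun hL.1 ω)

theorem IsGen.mul_apply_single_comm (hL : IsGen μ L) (ω ω' : Ω) :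
    μ ω * L (Pi.single ω' 1) ω = μ ω' * L (Pi.single ω 1) ω' := by
  simpa [pexp, Pi.single_apply] using hL.2.1 (Pi.single ω 1) (Pi.single ω' 1)

theorem IsGen.dform_eq_sum (hL : IsGen μ L) (f g : Ω → ℝ) :
    dform μ L f g = -(1 / 2) * ∑ ω, ∑ ω',
      μ ω * L (Pi.single ω' 1) ω * ((f ω - f ω') * (g ω - g ω')) := by
  set w : Ω → Ω → ℝ := fun ω ω' => μ ω * L (Pi.single ω' 1) ω with hw
  have swap : ∀ F : Ω → Ω → ℝ, ∑ ω, ∑ ω', w ω ω' * F ω' ω = ∑ ω, ∑ ω', w ω ω' * F ω ω' := by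
    intro F
    rw [sum_comm]
    simp only [hw, hL.mul_apply_single_comm _ _]
  have diag : ∀ F : Ω → ℝ, ∑ ω, ∑ ω', w ω ω' * F ω = 0 := fun F => by
    simp only [hw, ← sum_mul, ← mul_sum, hL.sum_apply_single, mul_zero, zero_mul, sum_const_zero]
  have cross : ∑ ω, ∑ ω', w ω ω' * (f ω * g ω') = dform μ L f g := by
    simp only [dform, pexp, apply_eq_sum_single L g, mul_sum, hw]
    exact sum_congr rfl fun _ _ => sum_congr rfl fun _ _ => by ring
  have expand : ∀ ω ω', w ω ω' * ((f ω - f ω') * (g ω - g ω')) = w ω ω' * (f ω * g ω)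
      + w ω ω' * (f ω' * g ω') - w ω ω' * (f ω * g ω') - w ω ω' * (f ω' * g ω) := by
    intros; ring
  change _ = -(1 / 2) * ∑ ω, ∑ ω', w ω ω' * ((f ω - f ω') * (g ω - g ω'))
  simp only [expand, sum_add_distrib, sum_sub_distrib]
  rw [swap (fun ω' ω => f ω' * g ω'), swap (fun ω' ω => f ω' * g ω), diag (fun ω => f ω * g ω),
    cross]
  ring

theorem IsGen.dform_le_dform (hμ : ∀ ω, 0 ≤ μ ω) (hL : IsGen μ L) {f g f' g' : Ω → ℝ}
    (h : ∀ ω ω', (f ω - f ω') * (g ω - g ω') ≤ (f' ω - f' ω') * (g' ω - g' ω')) :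
    dform μ L f g ≤ dform μ L f' g' := by
  rw [hL.dform_eq_sum, hL.dform_eq_sum, neg_mul, neg_mul, neg_le_neg_iff]
  refine mul_le_mul_of_nonneg_left (sum_le_sum fun ω _ => sum_le_sum fun ω' _ => ?_)
    (by norm_num)
  rcases eq_or_ne ω ω' with rfl | hne
  · simp
  · exact mul_le_mul_of_nonpos_left (h ω ω')
      (mul_nonpos_of_nonneg_of_nonpos (hμ ω) (hL.apply_single_nonpos hne))

theorem LogSob.of_one {C : ℝ} (hμ : ∀ ω, 0 ≤ μ ω) (hL : IsGen μ L) (hC : 0 ≤ C)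
    (hLS : LogSob μ L 1 C)    {p : ℝ} (hp0 : p ≠ 0) (hp1 : p < 1) : LogSob μ L p C := by
  have hLS1 : ∀ f : Ω → ℝ, (∀ ω, 0 < f ω) → entE μ f ≤ C / 4 * dform μ L f (fun ω => log (f ω)) :=
    by simpa [LogSob] using hLS
  rw [LogSob, if_neg hp0, if_neg hp1.ne]
  intro u hu
  have hlog : (fun ω => log (u ω ^ p)) = fun ω => p * log (u ω) :=
    funext fun ω => log_rpow (hu ω) p
  have hcmp : p * dform μ L (fun ω => u ω ^ p) (fun ω => log (u ω)) ≤
      p ^ 2 / (p - 1) * dform μ L (fun ω => u ω ^ (p - 1)) u := by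
    rw [← dform_const_mul_left, ← dform_const_mul_left]
    refine hL.dform_le_dform hμ fun ω ω' => ?_
    convert mul_rpow_sub_mul_log_sub_le hp0 hp1 (hu ω) (hu ω') using 1 <;> ring
  calc entE μ (fun ω => u ω ^ p)
      ≤ C / 4 * (p * dform μ L (fun ω => u ω ^ p) (fun ω => log (u ω))) := by
        rw [← dform_const_mul_right, ← hlog]
        exact hLS1 _ fun ω => rpow_pos_of_pos (hu ω) p
    _ ≤ C / 4 * (p ^ 2 / (p - 1) * dform μ L (fun ω => u ω ^ (p - 1)) u) := by gcongr
    _ = C * p ^ 2 / (4 * (p - 1)) * dform μ L (fun ω => u ω ^ (p - 1)) u := by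
        field_simp

end Generator

section Semigroup

variable [Fintype Ω] {μ : Ω → ℝ} {L : (Ω → ℝ) →ₗ[ℝ] (Ω → ℝ)}

theorem map_exp_apply_of_map_pow_succ {E F : Type*} [NormedAddCommGroup E] [NormedSpace ℝ E]
    [CompleteSpace E] [NormedAddCommGroup F] [NormedSpace ℝ F] (φ : E →L[ℝ] F) (T : E →L[ℝ] E)
    (v : E) (h : ∀ n, φ ((T ^ (n + 1)) v) = 0) : φ (NormedSpace.exp T v) = φ v := by
  have hs : HasSum (fun n : ℕ => φ (((n.factorial : ℝ)⁻¹ • T ^ n) v)) (φ (NormedSpace.exp T v)) :=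
    (NormedSpace.exp_series_hasSum_exp' (𝕂 := ℝ) T).mapL (φ.comp (ContinuousLinearMap.apply ℝ E v))
  refine hs.unique ?_
  have hterm : ∀ n ≠ 0, φ (((n.factorial : ℝ)⁻¹ • T ^ n) v) = 0 := fun n hn => by
    obtain ⟨k, rfl⟩ := Nat.exists_eq_succ_of_ne_zero hn
    rw [smul_apply, map_smul, h k, smul_zero]
  convert hasSum_single 0 hterm
  simp

theorem exp_add_of_commute_real {𝔸 : Type*} [NormedRing 𝔸] [NormedAlgebra ℝ 𝔸] [CompleteSpace 𝔸]
    {x y : 𝔸} (h : Commute x y) :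
    NormedSpace.exp (x + y) = NormedSpace.exp x * NormedSpace.exp y :=
  NormedSpace.exp_add_of_commute_of_mem_ball (𝕂 := ℝ) h
    ((NormedSpace.expSeries_radius_eq_top ℝ 𝔸).symm ▸ edist_lt_top _ _)
    ((NormedSpace.expSeries_radius_eq_top ℝ 𝔸).symm ▸ edist_lt_top _ _)

theorem exp_apply_nonneg {T : (Ω → ℝ) →L[ℝ] (Ω → ℝ)} (hT : ∀ h, 0 ≤ h → 0 ≤ T h) {g : Ω → ℝ}
    (hg : 0 ≤ g) : 0 ≤ NormedSpace.exp T g := by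
  have hpow : ∀ n : ℕ, 0 ≤ (T ^ n) g := fun n => by
    induction n with
    | zero => simpa using hg
    | succ n ih => rw [pow_succ', mul_apply_eq_comp]; exact hT _ ih
  refine ((NormedSpace.exp_series_hasSum_exp' (𝕂 := ℝ) T).mapL
    (ContinuousLinearMap.apply ℝ _ g)).nonneg fun n => ?_
  simpa using smul_nonneg (by positivity : (0 : ℝ) ≤ (n.factorial : ℝ)⁻¹) (hpow n)

theorem heat_zero (g : Ω → ℝ) : heat L 0 g = g := by
  simp [heat]

theorem heat_add (s t : ℝ) (g : Ω → ℝ) : heat L (s + t) g = heat L s (heat L t g) := by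
  have hcomm : Commute ((-s) • LinearMap.toContinuousLinearMap L)
      ((-t) • LinearMap.toContinuousLinearMap L) :=
    ((Commute.refl _).smul_left _).smul_right _
  simp only [heat, neg_add, add_smul, exp_add_of_commute_real hcomm,
    mul_apply_eq_comp]

theorem heat_sub (s : ℝ) (f g : Ω → ℝ) : heat L s (f - g) = heat L s f - heat L s g :=
  map_sub _ f g

theorem hasDerivAt_heat (g : Ω → ℝ) (ω : Ω) (s : ℝ) :
    HasDerivAt (fun s => heat L s g ω) (-L (heat L s g) ω) s := by
  have hexp := (hasDerivAt_exp_smul_const' (𝕂 := ℝ) (LinearMap.toContinuousLinearMap L) (-s)).scomp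
    s (hasDerivAt_neg s)
  have hev := ((ContinuousLinearMap.proj ω).comp
    (ContinuousLinearMap.apply ℝ (Ω → ℝ) g)).hasFDerivAt.comp_hasDerivAt s hexp
  have hneg : ∀ u : ℝ, (-u) • LinearMap.toContinuousLinearMap L =
      -(u • LinearMap.toContinuousLinearMap L) := fun u =>
    neg_smul u (LinearMap.toContinuousLinearMap L)
  simpa [heat, hneg, Function.comp_def] using hev

theorem IsGen.apply_const (hL : IsGen μ L) (c : ℝ) : L (fun _ => c) = 0 := by
  have : (fun _ : Ω => c) = c • fun _ => 1 := by funext; simp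
  rw [this, map_smul, hL.1, smul_zero]

theorem IsGen.heat_const (hL : IsGen μ L) (s c : ℝ) : heat L s (fun _ => c) = fun _ => c :=
  map_exp_apply_of_map_pow_succ (ContinuousLinearMap.id ℝ _) _ _ fun n => by
    have : ((-s) • LinearMap.toContinuousLinearMap L) (fun _ => c) = 0 := by
      simp [hL.apply_const]
    rw [pow_succ, mul_apply_eq_comp, this, map_zero, ContinuousLinearMap.id_apply]

theorem IsGen.heat_add_const (hL : IsGen μ L) (s c : ℝ) (g : Ω → ℝ) :
    heat L s (fun ω => g ω + c) = fun ω => heat L s g ω + c := by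
  have := map_add (NormedSpace.exp ((-s) • LinearMap.toContinuousLinearMap L)) g fun _ => c
  rw [← heat, ← heat, ← heat, hL.heat_const] at this
  exact this

theorem IsGen.pexp_apply (hL : IsGen μ L) (h : Ω → ℝ) : pexp μ (L h) = 0 := by
  simpa [hL.apply_const, pexp] using hL.2.1 (fun _ => 1) h

theorem IsGen.pexp_heat (hL : IsGen μ L) (s : ℝ) (g : Ω → ℝ) : pexp μ (heat L s g) = pexp μ g := by
  let φ : (Ω → ℝ) →L[ℝ] ℝ := ∑ ω, μ ω • ContinuousLinearMap.proj ω
  have hφ : ∀ f, φ f = pexp μ f := fun f => by simp [φ, pexp]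
  rw [← hφ, ← hφ]
  refine map_exp_apply_of_map_pow_succ φ _ g fun n => ?_
  rw [pow_succ', mul_apply_eq_comp, hφ]
  simpa [pexp, mul_left_comm _ s, ← mul_sum] using
    congrArg (s * ·) (hL.pexp_apply ((((-s) • LinearMap.toContinuousLinearMap L) ^ n) g))

variable [DecidableEq Ω]

theorem IsGen.apply_le_mul (hL : IsGen μ L) {h : Ω → ℝ} (hh : 0 ≤ h) (ω : Ω) :
    L h ω ≤ (∑ ω', |L (Pi.single ω' 1) ω'|) * h ω := by
  rw [apply_eq_sum_single L h ω]
  calc ∑ ω', h ω' * L (Pi.single ω' 1) ω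
      ≤ ∑ ω', if ω' = ω then h ω * |L (Pi.single ω 1) ω| else 0 := by
        refine sum_le_sum fun ω' _ => ?_
        split_ifs with h'
        · subst h'; exact mul_le_mul_of_nonneg_left (le_abs_self _) (hh ω')
        · exact mul_nonpos_of_nonneg_of_nonpos (hh ω') (hL.apply_single_nonpos (Ne.symm h'))
    _ = |L (Pi.single ω 1) ω| * h ω := by rw [sum_ite_eq', if_pos (mem_univ _), mul_comm]
    _ ≤ _ := mul_le_mul_of_nonneg_right
        (single_le_sum (f := fun ω' => |L (Pi.single ω' 1) ω'|) (fun _ _ => abs_nonneg _)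
          (mem_univ ω)) (hh ω)

/-- Writing `-sL = -sc + s(c - L)` with `c` dominating the diagonal of `L`, the operator
`c - L` preserves nonnegativity, hence so does `e^{-sL} = e^{-sc} e^{s(c - L)}`. -/
theorem IsGen.heat_nonneg (hL : IsGen μ L) {s : ℝ} (hs : 0 ≤ s) {g : Ω → ℝ} (hg : 0 ≤ g) :
    0 ≤ heat L s g := by
  set c := ∑ ω', |L (Pi.single ω' 1) ω'|
  set M : (Ω → ℝ) →L[ℝ] (Ω → ℝ) := c • 1 - LinearMap.toContinuousLinearMap L
  have hM : ∀ h, 0 ≤ h → 0 ≤ (s • M) h := fun h hh ω => by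
    have := hL.apply_le_mul hh ω
    simp only [M, smul_apply, sub_apply, Pi.smul_apply,
      Pi.sub_apply, one_apply_eq_self, smul_eq_mul, Pi.zero_apply,
      LinearMap.coe_toContinuousLinearMap']
    exact mul_nonneg hs (by linarith)
  have hsplit : (-s) • LinearMap.toContinuousLinearMap L = algebraMap ℝ _ (-(s * c)) + s • M := by
    simp only [M, Algebra.algebraMap_eq_smul_one, smul_sub, smul_smul]
    module
  have : heat L s g = exp (-(s * c)) • NormedSpace.exp (s • M) g := by
    rw [heat, hsplit, exp_add_of_commute_real (Algebra.commutes _ _),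
      ← NormedSpace.algebraMap_exp_comm, ← exp_eq_exp_ℝ, mul_apply_eq_comp,
      Algebra.algebraMap_eq_smul_one, smul_apply, one_apply_eq_self]
  rw [this]
  exact smul_nonneg (exp_pos _).le (exp_apply_nonneg hM hg)

theorem IsGen.heat_mono (hL : IsGen μ L) {s : ℝ} (hs : 0 ≤ s) {f g : Ω → ℝ} (hfg : f ≤ g) :
    heat L s f ≤ heat L s g := by
  simpa [heat_sub] using hL.heat_nonneg hs (sub_nonneg.2 hfg)

theorem IsGen.heat_mem_Icc (hL : IsGen μ L) {s : ℝ} (hs : 0 ≤ s) {g : Ω → ℝ} {m M : ℝ}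
    (hg : ∀ ω, g ω ∈ Set.Icc m M) (ω : Ω) : heat L s g ω ∈ Set.Icc m M := by
  have hm := hL.heat_mono hs (show (fun _ => m) ≤ g from fun ω => (hg ω).1)
  have hM := hL.heat_mono hs (show g ≤ fun _ => M from fun ω => (hg ω).2)
  rw [hL.heat_const] at hm hM
  exact ⟨hm ω, hM ω⟩

theorem abs_log_le_iff_mem_Icc {x K : ℝ} (hx : 0 < x) :
    |log x| ≤ K ↔ x ∈ Set.Icc (exp (-K)) (exp K) := by
  rw [abs_le, Set.mem_Icc, le_log_iff_exp_le hx, log_le_iff_le_exp hx]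

theorem IsGen.heat_pos (hL : IsGen μ L) {s : ℝ} (hs : 0 ≤ s) {g : Ω → ℝ} (hg : ∀ ω, 0 < g ω)
    (ω : Ω) : 0 < heat L s g ω := by
  have hK : ∀ ω, |log (g ω)| ≤ ∑ ω', |log (g ω')| := fun ω =>
    single_le_sum (f := fun ω' => |log (g ω')|) (fun _ _ => abs_nonneg _) (mem_univ ω)
  exact (exp_pos _).trans_le
    (hL.heat_mem_Icc hs (fun ω => (abs_log_le_iff_mem_Icc (hg ω)).1 (hK ω)) ω).1

theorem IsGen.abs_log_heat_le (hL : IsGen μ L) {s : ℝ} (hs : 0 ≤ s) {g : Ω → ℝ}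
    (hg : ∀ ω, 0 < g ω) {K : ℝ} (hK : ∀ ω, |log (g ω)| ≤ K) (ω : Ω) :
    |log (heat L s g ω)| ≤ K :=
  (abs_log_le_iff_mem_Icc (hL.heat_pos hs hg ω)).2
    (hL.heat_mem_Icc hs (fun ω => (abs_log_le_iff_mem_Icc (hg ω)).1 (hK ω)) ω)

end Semigroup

section LogNorm

variable [Fintype Ω] {μ : Ω → ℝ}

/-- The logarithm of `pnorm μ p f` when `p ≠ 0` and `f` is positive. -/
def logNorm (μ : Ω → ℝ) (p : ℝ) (f : Ω → ℝ) : ℝ := log (pexp μ fun ω => f ω ^ p) / p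

theorem continuousAt_logNorm [Nonempty Ω] (hμ : ∀ ω, 0 < μ ω) {f : Ω → ℝ} (hf : ∀ ω, 0 < f ω)
    {p : ℝ} (hp : p ≠ 0) : ContinuousAt (fun p => logNorm μ p f) p := by
  have hcont : Continuous fun p : ℝ => pexp μ fun ω => f ω ^ p :=
    continuous_finsetSum _ fun ω _ => continuous_const.mul
      (continuous_iff_continuousAt.2 fun _ => continuousAt_const_rpow (hf ω).ne')
  exact (hcont.continuousAt.log (pexp_pos hμ fun ω => rpow_pos_of_pos (hf ω) p).ne').div
    continuousAt_id hp

/-- Hölder's inequality for exponents `1/q` and `1/(1-q)`, applied to `u^q = (uv)^q v^{-q}`. -/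
theorem pexp_rpow_le (hμ : ∀ ω, 0 < μ ω) {u v : Ω → ℝ} (hu : ∀ ω, 0 < u ω) (hv : ∀ ω, 0 < v ω)
    {q : ℝ} (hq0 : 0 ≤ q) (hq1 : q < 1) :
    pexp μ (fun ω => u ω ^ q) ≤
      (pexp μ fun ω => u ω * v ω) ^ q * (pexp μ fun ω => v ω ^ (q / (q - 1))) ^ (1 - q) := by
  have hq1' : q - 1 ≠ 0 := by linarith
  have hq1'' : 1 - q ≠ 0 := by linarith
  have hP : 1 ≤ (1 - q)⁻¹ := one_le_inv₀ (by linarith) |>.2 (by linarith)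
  have key := inner_le_weight_mul_Lp_of_nonneg univ hP (fun ω => μ ω * (u ω * v ω))
    (fun ω => u ω ^ (q - 1) / v ω)
    (fun ω => by have := hμ ω; have := hu ω; have := hv ω; positivity)
    (fun ω => by have := hu ω; have := hv ω; positivity)
  have e1 : ∀ ω, μ ω * (u ω * v ω) * (u ω ^ (q - 1) / v ω) = μ ω * u ω ^ q := fun ω => by
    rw [rpow_sub_one (hu ω).ne']
    field_simp [(hu ω).ne', (hv ω).ne']
  have e2 : ∀ ω, μ ω * (u ω * v ω) * (u ω ^ (q - 1) / v ω) ^ (1 - q)⁻¹ =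
      μ ω * v ω ^ (q / (q - 1)) := fun ω => by
    have hexp : (q - 1) * (1 - q)⁻¹ = -1 := by field_simp; ring
    have hexp' : q / (q - 1) = 1 - (1 - q)⁻¹ := by field_simp; ring
    rw [div_rpow (rpow_nonneg (hu ω).le _) (hv ω).le, ← rpow_mul (hu ω).le, hexp, rpow_neg_one,
      hexp', rpow_sub (hv ω), rpow_one]
    field_simp [(hu ω).ne', (hv ω).ne']
  simp only [e1, e2, inv_inv, sub_sub_cancel] at key
  exact key

theorem logNorm_add_logNorm_le [Nonempty Ω] (hμ : ∀ ω, 0 < μ ω) {u v : Ω → ℝ}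
    (hu : ∀ ω, 0 < u ω) (hv : ∀ ω, 0 < v ω) {q : ℝ} (hq0 : 0 < q) (hq1 : q < 1) :
    logNorm μ q u + logNorm μ (q / (q - 1)) v ≤ log (pexp μ fun ω => u ω * v ω) := by
  have hU := pexp_pos hμ fun ω => rpow_pos_of_pos (hu ω) q
  have hUV := pexp_pos hμ fun ω => mul_pos (hu ω) (hv ω)
  have hV := pexp_pos hμ fun ω => rpow_pos_of_pos (hv ω) (q / (q - 1))
  have hlog := log_le_log hU (pexp_rpow_le hμ hu hv hq0.le hq1)
  rw [log_mul (rpow_pos_of_pos hUV q).ne' (rpow_pos_of_pos hV _).ne', log_rpow hUV,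
    log_rpow hV] at hlog
  have hq1' : q - 1 ≠ 0 := by linarith
  rw [logNorm, logNorm, div_div_eq_mul_div, div_add_div _ _ hq0.ne' hq0.ne',
    div_le_iff₀ (by positivity)]
  nlinarith

theorem pexp_exp_mul_le (hμ : ∀ ω, 0 ≤ μ ω) (hμ1 : ∑ ω, μ ω = 1) {X : Ω → ℝ} {K σ δ : ℝ}
    (hX : ∀ ω, |X ω| ≤ K) (hσ : |σ| ≤ δ) (hδK : δ * K ≤ 1) :
    pexp μ (fun ω => exp (σ * X ω)) ≤ 1 + σ * pexp μ X + δ ^ 2 * K ^ 2 := by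
  have hpt : ∀ ω, exp (σ * X ω) ≤ 1 + σ * X ω + δ ^ 2 * K ^ 2 := fun ω => by
    have hσX : |σ * X ω| ≤ δ * K := by
      rw [abs_mul]; exact mul_le_mul hσ (hX ω) (abs_nonneg _) ((abs_nonneg _).trans hσ)
    have hsq : (σ * X ω) ^ 2 ≤ δ ^ 2 * K ^ 2 := by
      rw [← mul_pow, ← sq_abs]; exact pow_le_pow_left₀ (abs_nonneg _) hσX 2
    have := le_of_abs_le (abs_exp_sub_one_sub_id_le (hσX.trans hδK))
    linarith
  calc pexp μ (fun ω => exp (σ * X ω)) ≤ pexp μ (fun ω => 1 + σ * X ω + δ ^ 2 * K ^ 2) :=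
        pexp_le_pexp hμ hpt
    _ = 1 + σ * pexp μ X + δ ^ 2 * K ^ 2 := by
        rw [pexp_add, pexp_add, pexp_const hμ1, pexp_const hμ1, pexp_const_mul]

theorem log_pexp_exp_add_log_pexp_exp_neg_le [Nonempty Ω] (hμ : ∀ ω, 0 < μ ω)
    (hμ1 : ∑ ω, μ ω = 1) {X : Ω → ℝ} {K δ : ℝ} (hX : ∀ ω, |X ω| ≤ K) (hδ : 0 ≤ δ)
    (hδK : δ * K ≤ 1) :
    log (pexp μ fun ω => exp (δ * X ω)) + log (pexp μ fun ω => exp (-δ * X ω)) ≤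
      2 * δ ^ 2 * K ^ 2 := by
  have hμ' : ∀ ω, 0 ≤ μ ω := fun ω => (hμ ω).le
  have hplus := pexp_exp_mul_le hμ' hμ1 hX (abs_of_nonneg hδ).le hδK
  have hminus := pexp_exp_mul_le hμ' hμ1 hX (abs_neg δ ▸ (abs_of_nonneg hδ).le) hδK
  have hEp := pexp_pos hμ fun ω => exp_pos (δ * X ω)
  have hEm := pexp_pos hμ fun ω => exp_pos (-δ * X ω)
  have hprod : (pexp μ fun ω => exp (δ * X ω)) * (pexp μ fun ω => exp (-δ * X ω)) ≤
      (1 + δ ^ 2 * K ^ 2) ^ 2 := by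
    nlinarith [mul_le_mul hplus hminus hEm.le (hEp.le.trans hplus), sq_nonneg (δ * pexp μ X)]
  rw [← log_mul hEp.ne' hEm.ne']
  calc _ ≤ log ((1 + δ ^ 2 * K ^ 2) ^ 2) := log_le_log (mul_pos hEp hEm) hprod
    _ = 2 * log (1 + δ ^ 2 * K ^ 2) := by rw [log_pow]; norm_num
    _ ≤ 2 * δ ^ 2 * K ^ 2 := by
        have := log_le_sub_one_of_pos (by positivity : (0 : ℝ) < 1 + δ ^ 2 * K ^ 2)
        linarith

theorem logNorm_sub_le_logNorm_neg [Nonempty Ω] (hμ : ∀ ω, 0 < μ ω) (hμ1 : ∑ ω, μ ω = 1)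
    {h : Ω → ℝ} (hh : ∀ ω, 0 < h ω) {K δ : ℝ} (hK : ∀ ω, |log (h ω)| ≤ K) (hδ : 0 < δ)
    (hδK : δ * K ≤ 1) :
    logNorm μ δ h - 2 * δ * K ^ 2 ≤ logNorm μ (-δ) h := by
  have key := log_pexp_exp_add_log_pexp_exp_neg_le hμ hμ1 hK hδ.le hδK
  simp only [← rpow_def_of_pos (hh _), mul_comm _ (log (h _))] at key
  rw [logNorm, logNorm, div_neg, le_neg, neg_sub, le_sub_iff_add_le, ← add_div,
    div_le_iff₀ hδ]
  linarith

end LogNorm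

section Flow

def hcExponent (C P s : ℝ) : ℝ := 1 - (1 - P) * exp (4 / C * s)

theorem hcExponent_zero (C P : ℝ) : hcExponent C P 0 = P := by
  simp [hcExponent]

theorem hcExponent_lt_one {C P : ℝ} (hP : P < 1) (s : ℝ) : hcExponent C P s < 1 := by
  have := mul_pos (sub_pos.2 hP) (exp_pos (4 / C * s))
  rw [hcExponent]; linarith

theorem hcExponent_antitone {C P : ℝ} (hC : 0 < C) (hP : P ≤ 1) : Antitone (hcExponent C P) :=
  fun s t hst => sub_le_sub_left (mul_le_mul_of_nonneg_left
    (exp_le_exp.2 (mul_le_mul_of_nonneg_left hst (by positivity))) (sub_nonneg.2 hP)) 1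

theorem hasDerivAt_hcExponent (C P s : ℝ) :
    HasDerivAt (hcExponent C P) (-(4 / C) * (1 - hcExponent C P s)) s := by
  refine ((((hasDerivAt_id s).const_mul (4 / C)).exp.const_mul (1 - P)).const_sub 1).congr_deriv ?_
  simp only [hcExponent, id]; ring

theorem nonneg_of_hcExponent_neg {C P t : ℝ} (hC : 0 < C) (hP : 0 ≤ P)
    (h : hcExponent C P t < 0) : 0 ≤ t := by
  by_contra! ht
  have : exp (4 / C * t) < 1 := exp_lt_one_iff.2 (mul_neg_of_pos_of_neg (by positivity) ht)
  rw [hcExponent] at h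
  nlinarith [exp_pos (4 / C * t)]

variable [Fintype Ω] {μ : Ω → ℝ} {L : (Ω → ℝ) →ₗ[ℝ] (Ω → ℝ)}

/-- Along `Q' = -(4/C)(1 - Q)`, the `Q`-logSob inequality is exactly the statement that
`d/ds (log m / Q) ≥ 0`, where `m = E u^Q` and `m' = Q' E[u^Q log u] - Q 𝓔(u^{Q-1}, u)`. -/
theorem LogSob.mul_deriv_sub_nonneg {C Q : ℝ}
    (hLS : LogSob μ L Q C) (hC : 0 < C) (hQ0 : Q ≠ 0) (hQ1 : Q < 1) {u : Ω → ℝ}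
    (hu : ∀ ω, 0 < u ω) :
    0 ≤ Q * (-(4 / C) * (1 - Q) * pexp μ (fun ω => u ω ^ Q * log (u ω))
        - Q * dform μ L (fun ω => u ω ^ (Q - 1)) u)
      - -(4 / C) * (1 - Q) * ((pexp μ fun ω => u ω ^ Q) * log (pexp μ fun ω => u ω ^ Q)) := by
  rw [LogSob, if_neg hQ0, if_neg hQ1.ne] at hLS
  have hent := hLS u hu
  have hlog : pexp μ (fun ω => u ω ^ Q * log (u ω ^ Q)) =
      Q * pexp μ (fun ω => u ω ^ Q * log (u ω)) := by
    rw [← pexp_const_mul]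
    exact congrArg _ (funext fun ω => by rw [log_rpow (hu ω)]; ring)
  rw [entE, hlog] at hent
  have hQ1' : Q - 1 ≠ 0 := by linarith
  have hfac : -(4 / C) * (1 - Q) * (C * Q ^ 2 / (4 * (Q - 1))) = Q ^ 2 := by
    field_simp; ring
  have := mul_le_mul_of_nonpos_left hent
    (by nlinarith [div_pos four_pos hC] : -(4 / C) * (1 - Q) ≤ 0)
  rw [← mul_assoc, hfac] at this
  linear_combination this

variable [DecidableEq Ω]

theorem IsGen.hasDerivAt_pexp_heat_rpow (hL : IsGen μ L) {g : Ω → ℝ} (hg : ∀ ω, 0 < g ω)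
    {Q : ℝ → ℝ} {Q' s : ℝ} (hs : 0 ≤ s) (hQ : HasDerivAt Q Q' s) :
    HasDerivAt (fun s => pexp μ fun ω => heat L s g ω ^ Q s)
      (Q' * pexp μ (fun ω => heat L s g ω ^ Q s * log (heat L s g ω))
        - Q s * dform μ L (fun ω => heat L s g ω ^ (Q s - 1)) (heat L s g)) s := by
  have hterm : ∀ ω, HasDerivAt (fun s => μ ω * heat L s g ω ^ Q s)
      (μ ω * (-L (heat L s g) ω * Q s * heat L s g ω ^ (Q s - 1)
        + Q' * heat L s g ω ^ Q s * log (heat L s g ω))) s := fun ω =>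
    ((hasDerivAt_heat g ω s).rpow hQ (hL.heat_pos hs hg ω)).const_mul (μ ω)
  refine (HasDerivAt.fun_sum (u := univ) fun ω _ => hterm ω).congr_deriv ?_
  simp only [pexp, dform, mul_sum, ← sum_sub_distrib]
  exact sum_congr rfl fun ω _ => by ring

theorem IsGen.logNorm_le_logNorm_heat [Nonempty Ω] (hμ : ∀ ω, 0 < μ ω) (hL : IsGen μ L)
    {C : ℝ} (hC : 0 < C) (hLS : LogSob μ L 1 C) {g : Ω → ℝ} (hg : ∀ ω, 0 < g ω) {P t : ℝ}
    (hP : P < 1) (ht : 0 ≤ t) (hQ : ∀ s ∈ Set.Icc 0 t, hcExponent C P s ≠ 0) :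
    logNorm μ P g ≤ logNorm μ (hcExponent C P t) (heat L t g) := by
  set Q := hcExponent C P
  set m : ℝ → ℝ := fun s => pexp μ fun ω => heat L s g ω ^ Q s
  have hm : ∀ s, 0 ≤ s → 0 < m s := fun s hs =>
    pexp_pos hμ fun ω => rpow_pos_of_pos (hL.heat_pos hs hg ω) _
  have hderiv : ∀ s ∈ Set.Icc 0 t, HasDerivAt (fun s => logNorm μ (Q s) (heat L s g))
      ((Q s * (-(4 / C) * (1 - Q s) * pexp μ (fun ω => heat L s g ω ^ Q s * log (heat L s g ω))
        - Q s * dform μ L (fun ω => heat L s g ω ^ (Q s - 1)) (heat L s g))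
        - -(4 / C) * (1 - Q s) * (m s * log (m s))) / (m s * Q s ^ 2)) s := by
    intro s hs
    have := ((hL.hasDerivAt_pexp_heat_rpow hg hs.1 (hasDerivAt_hcExponent C P s)).log
      (hm s hs.1).ne').div (hasDerivAt_hcExponent C P s) (hQ s hs)
    refine this.congr_deriv ?_
    have hm' := (hm s hs.1).ne'
    have hQ' := hQ s hs
    simp only [m, Q] at hm' hQ' ⊢
    field_simp
  have hmono : MonotoneOn (fun s => logNorm μ (Q s) (heat L s g)) (Set.Icc 0 t) := by
    refine monotoneOn_of_hasDerivWithinAt_nonneg (convex_Icc 0 t)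
      (fun s hs => (hderiv s hs).continuousAt.continuousWithinAt)
      (fun s hs => (hderiv s (interior_subset hs)).hasDerivWithinAt) fun s hs => ?_
    have hs := interior_subset hs
    exact div_nonneg ((hLS.of_one (fun ω => (hμ ω).le) hL hC.le (hQ s hs)
      (hcExponent_lt_one hP s)).mul_deriv_sub_nonneg hC (hQ s hs) (hcExponent_lt_one hP s)
      fun ω => hL.heat_pos hs.1 hg ω) (mul_nonneg (hm s hs.1).le (sq_nonneg _))
  simpa [Q, hcExponent_zero, heat_zero] using
    hmono (Set.left_mem_Icc.2 ht) (Set.right_mem_Icc.2 ht) ht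

end Flow

section ReverseHypercontractivity

variable [Fintype Ω] [DecidableEq Ω] {μ : Ω → ℝ} {L : (Ω → ℝ) →ₗ[ℝ] (Ω → ℝ)}

/-- The exponent cannot flow through `0`: flow from `p` down to `δ` (at time `s₁`), jump from
`δ` to `-δ`, and flow from `-δ` for the remaining time `t - s₁`. -/
theorem IsGen.logNorm_sub_le_logNorm_heat (hμ : ∀ ω, 0 < μ ω) (hμ1 : ∑ ω, μ ω = 1)
    (hL : IsGen μ L) {C : ℝ} (hC : 0 < C) (hLS : LogSob μ L 1 C) {g : Ω → ℝ}
    (hg : ∀ ω, 0 < g ω) {K : ℝ} (hK : ∀ ω, |log (g ω)| ≤ K) {p t δ : ℝ} (hδ : 0 < δ)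
    (hδp : δ < p) (hp1 : p < 1) (hδK : δ * K ≤ 1) (ht : 1 - δ ≤ (1 - p) * exp (4 / C * t)) :
    logNorm μ p g - 2 * δ * K ^ 2 ≤
      logNorm μ (1 - (1 + δ) / (1 - δ) * ((1 - p) * exp (4 / C * t))) (heat L t g) := by
  have := nonempty_of_sum_eq_one hμ1
  have h1p : 0 < 1 - p := by linarith
  set s₁ := C / 4 * log ((1 - δ) / (1 - p))
  have hs₁ : exp (4 / C * s₁) = (1 - δ) / (1 - p) := by
    rw [← mul_assoc, div_mul_div_comm, mul_comm 4 C, div_self (by positivity), one_mul,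
      exp_log (by apply div_pos <;> linarith)]
  have hs₁0 : 0 ≤ s₁ :=
    mul_nonneg (by positivity) (log_nonneg ((le_div_iff₀ h1p).2 (by linarith)))
  have hs₁t : s₁ ≤ t := by
    have : exp (4 / C * s₁) ≤ exp (4 / C * t) := by rw [hs₁, div_le_iff₀ h1p]; linarith
    exact le_of_mul_le_mul_left (exp_le_exp.1 this) (by positivity)
  have hQs₁ : hcExponent C p s₁ = δ := by
    rw [hcExponent, hs₁, mul_div_cancel₀ _ h1p.ne']; ring
  have flow₁ := hL.logNorm_le_logNorm_heat hμ hC hLS hg hp1 hs₁0 fun s hs =>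
    (hδ.trans_le (hQs₁ ▸ hcExponent_antitone hC hp1.le hs.2)).ne'
  have jump := logNorm_sub_le_logNorm_neg hμ hμ1 (hL.heat_pos hs₁0 hg)
    (hL.abs_log_heat_le hs₁0 hg hK) (hQs₁ ▸ hδ) (hQs₁ ▸ hδK)
  have flow₂ := hL.logNorm_le_logNorm_heat hμ hC hLS (hL.heat_pos hs₁0 hg)
    (by linarith : -δ < 1) (sub_nonneg.2 hs₁t) fun s hs =>
    ((hcExponent_antitone hC (by linarith) hs.1).trans_lt
      (by rw [hcExponent_zero]; linarith)).ne
  rw [← heat_add, sub_add_cancel, hcExponent, mul_sub, exp_sub, hs₁] at flow₂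
  rw [hQs₁] at flow₁ jump
  have hQ : (1 - -δ) * (exp (4 / C * t) / ((1 - δ) / (1 - p))) =
      (1 + δ) / (1 - δ) * ((1 - p) * exp (4 / C * t)) := by
    have h1δ : 1 - δ ≠ 0 := (sub_pos.2 (hδp.trans hp1)).ne'
    field_simp
    ring
  rw [hQ] at flow₂
  linarith

theorem IsGen.logNorm_le_logNorm_heat_of_neg (hμ : ∀ ω, 0 < μ ω) (hμ1 : ∑ ω, μ ω = 1)
    (hL : IsGen μ L) {C : ℝ} (hC : 0 < C) (hLS : LogSob μ L 1 C) {g : Ω → ℝ}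
    (hg : ∀ ω, 0 < g ω) {p t : ℝ} (hp0 : 0 < p) (hp1 : p < 1) (hQ : hcExponent C p t < 0) :
    logNorm μ p g ≤ logNorm μ (hcExponent C p t) (heat L t g) := by
  have := nonempty_of_sum_eq_one hμ1
  set K := ∑ ω, |log (g ω)|
  have hK : ∀ ω, |log (g ω)| ≤ K := fun ω =>
    single_le_sum (f := fun ω' => |log (g ω')|) (fun _ _ => abs_nonneg _) (mem_univ ω)
  have hK0 : 0 ≤ K := sum_nonneg fun _ _ => abs_nonneg _
  set E := (1 - p) * exp (4 / C * t)
  have hE : 1 < E := by rw [hcExponent] at hQ; linarith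
  have ht : 0 ≤ t := by
    by_contra! h
    have : exp (4 / C * t) < 1 := exp_lt_one_iff.2 (mul_neg_of_pos_of_neg (by positivity) h)
    nlinarith [exp_pos (4 / C * t)]
  have hlim : Tendsto (fun δ => logNorm μ (1 - (1 + δ) / (1 - δ) * E) (heat L t g) + 2 * δ * K ^ 2)
      (𝓝[>] 0) (𝓝 (logNorm μ (1 - E) (heat L t g))) := by
    have hexp : Tendsto (fun δ : ℝ => 1 - (1 + δ) / (1 - δ) * E) (𝓝[>] 0) (𝓝 (1 - E)) := by
      have : ContinuousAt (fun δ : ℝ => 1 - (1 + δ) / (1 - δ) * E) 0 := by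
        fun_prop (disch := norm_num)
      simpa using this.tendsto.mono_left nhdsWithin_le_nhds
    have herr : Tendsto (fun δ : ℝ => 2 * δ * K ^ 2) (𝓝[>] 0) (𝓝 0) := by
      have : Continuous fun δ : ℝ => 2 * δ * K ^ 2 := by fun_prop
      simpa using (this.tendsto 0).mono_left nhdsWithin_le_nhds
    have := ((continuousAt_logNorm hμ (hL.heat_pos ht hg) hQ.ne).tendsto.comp hexp).add herr
    rwa [add_zero] at this
  refine ge_of_tendsto hlim ?_
  filter_upwards [Ioo_mem_nhdsGT (lt_min hp0 (by positivity : (0 : ℝ) < 1 / (K + 1)))]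
    with δ ⟨hδ, hδmin⟩
  have hδK : δ * K ≤ 1 := by
    have := (lt_div_iff₀ (by positivity)).1 (hδmin.trans_le (min_le_right _ _))
    nlinarith
  have := hL.logNorm_sub_le_logNorm_heat hμ hμ1 hC hLS hg hK hδ
    (hδmin.trans_le (min_le_left _ _)) hp1 hδK ((sub_le_self 1 hδ.le).trans hE.le)
  linarith

end ReverseHypercontractivity

section Mixing

variable [Fintype Ω] [DecidableEq Ω] {μ : Ω → ℝ} {L : (Ω → ℝ) →ₗ[ℝ] (Ω → ℝ)}

theorem IsGen.exp_logNorm_add_logNorm_le_pexp_mul_heat (hμ : ∀ ω, 0 < μ ω)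
    (hμ1 : ∑ ω, μ ω = 1) (hL : IsGen μ L) {C : ℝ} (hC : 0 < C) (hLS : LogSob μ L 1 C)
    {f g : Ω → ℝ} (hf : ∀ ω, 0 < f ω) (hg : ∀ ω, 0 < g ω) {p q t : ℝ} (hp0 : 0 < p)
    (hp1 : p < 1) (hq0 : 0 < q) (hq1 : q < 1) (hpqt : (1 - p) * (1 - q) * exp (4 / C * t) = 1) :
    exp (logNorm μ q f + logNorm μ p g) ≤ pexp μ fun ω => f ω * heat L t g ω := by
  have := nonempty_of_sum_eq_one hμ1
  have hQ : hcExponent C p t = q / (q - 1) := by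
    rw [hcExponent, eq_div_iff (by linarith)]
    linear_combination hpqt
  have hQneg : hcExponent C p t < 0 := hQ ▸ div_neg_of_pos_of_neg hq0 (by linarith)
  have hrhc := hL.logNorm_le_logNorm_heat_of_neg hμ hμ1 hC hLS hg hp0 hp1 hQneg
  rw [hQ] at hrhc
  have hTg := hL.heat_pos (nonneg_of_hcExponent_neg hC hp0.le hQneg) hg
  have := logNorm_add_logNorm_le hμ hf hTg hq0 hq1
  rw [← exp_log (pexp_pos hμ fun ω => mul_pos (hf ω) (hTg ω))]
  exact exp_le_exp.2 (by linarith)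

theorem tendsto_logNorm_indicator_add (D : Finset Ω) (hD : 0 < ∑ ω ∈ D, μ ω) {q : ℝ}
    (hq : 0 < q) :
    Tendsto (fun ε => logNorm μ q fun ω => (if ω ∈ D then 1 else 0) + ε) (𝓝 0)
      (𝓝 (log (∑ ω ∈ D, μ ω) / q)) := by
  have hterm : ∀ c : ℝ, c ^ q = c → Tendsto (fun ε => (c + ε) ^ q) (𝓝 0) (𝓝 c) := fun c hc => by
    simpa [hc, Function.comp_def] using (continuousAt_rpow_const c q (Or.inr hq.le)).tendsto.comp
      ((continuous_const_add c).tendsto' 0 c (add_zero c))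
  have hsum : Tendsto (fun ε => pexp μ fun ω => ((if ω ∈ D then 1 else 0) + ε) ^ q) (𝓝 0)
      (𝓝 (∑ ω ∈ D, μ ω)) := by
    rw [← pexp_indicator]
    refine tendsto_finsetSum _ fun ω _ => (hterm _ ?_).const_mul (μ ω)
    split_ifs
    · exact one_rpow q
    · exact zero_rpow hq.ne'
  exact (hsum.log hD.ne').div_const q

theorem IsGen.exp_log_div_add_log_div_le_pexp_mul_heat (hμ : ∀ ω, 0 < μ ω) (hμ1 : ∑ ω, μ ω = 1)
    (hL : IsGen μ L) {C : ℝ} (hC : 0 < C) (hLS : LogSob μ L 1 C) {A B : Finset Ω}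
    (hA : 0 < ∑ ω ∈ A, μ ω) (hB : 0 < ∑ ω ∈ B, μ ω) {p q t : ℝ} (hp0 : 0 < p) (hp1 : p < 1)
    (hq0 : 0 < q) (hq1 : q < 1) (hpqt : (1 - p) * (1 - q) * exp (4 / C * t) = 1) :
    exp (log (∑ ω ∈ A, μ ω) / q + log (∑ ω ∈ B, μ ω) / p) ≤
      pexp μ (fun ω => (if ω ∈ A then 1 else 0) *
        heat L t (fun ω' => if ω' ∈ B then 1 else 0) ω) := by
  have := nonempty_of_sum_eq_one hμ1
  have hind : ∀ (D : Finset Ω) {ε : ℝ}, 0 < ε → ∀ ω, 0 < (if ω ∈ D then 1 else 0) + ε :=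
    fun D ε hε ω => by split_ifs <;> linarith
  have hrhs : Tendsto (fun ε => pexp μ fun ω => ((if ω ∈ A then 1 else 0) + ε) *
      heat L t (fun ω' => (if ω' ∈ B then 1 else 0) + ε) ω) (𝓝 0)
      (𝓝 (pexp μ fun ω => (if ω ∈ A then 1 else 0) *
        heat L t (fun ω' => if ω' ∈ B then 1 else 0) ω)) := by
    simp only [hL.heat_add_const]
    have : Continuous fun ε => pexp μ fun ω => ((if ω ∈ A then 1 else 0) + ε) *
        (heat L t (fun ω' => if ω' ∈ B then 1 else 0) ω + ε) := by
      unfold pexp; fun_prop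
    simpa using this.tendsto 0
  have hlhs := (continuous_exp.tendsto _).comp
    ((tendsto_logNorm_indicator_add A hA hq0).add (tendsto_logNorm_indicator_add B hB hp0))
  refine le_of_tendsto_of_tendsto (hlhs.mono_left (nhdsWithin_le_nhds (s := Set.Ioi 0)))
    (hrhs.mono_left nhdsWithin_le_nhds) ?_
  filter_upwards [self_mem_nhdsWithin] with ε (hε : 0 < ε)
  exact hL.exp_logNorm_add_logNorm_le_pexp_mul_heat hμ hμ1 hC hLS (hind A hε) (hind B hε)
    hp0 hp1 hq0 hq1 hpqt

/-- The exponents `q = a(1-r²)/(a+rb)` and `p = b(1-r²)/(ra+b)`, with `r = e^{-2t/C}`, satisfy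
`(1-p)(1-q) = r²` and minimise `a²/q + b²/p` under this constraint. -/
theorem IsGen.mixing_of_pos (hμ : ∀ ω, 0 < μ ω) (hμ1 : ∑ ω, μ ω = 1) (hL : IsGen μ L)
    {C : ℝ} (hC : 0 < C) (hLS : LogSob μ L 1 C) {a b t : ℝ} (ha : 0 < a) (hb : 0 < b)
    (ht : 0 < t) {A B : Finset Ω} (hA : ∑ ω ∈ A, μ ω = exp (-(a ^ 2) / 2))
    (hB : ∑ ω ∈ B, μ ω = exp (-(b ^ 2) / 2)) :
    exp (-(1 / 2) * ((a ^ 2 + 2 * exp (-2 * t / C) * a * b + b ^ 2) /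
        (1 - exp (-4 * t / C)))) ≤
      pexp μ (fun ω => (if ω ∈ A then 1 else 0) *
        heat L t (fun ω' => if ω' ∈ B then 1 else 0) ω) := by
  set r := exp (-2 * t / C)
  have hr0 : 0 < r := exp_pos _
  have hr1 : r < 1 := exp_lt_one_iff.2 (div_neg_of_neg_of_pos (by linarith) hC)
  have hr2 : exp (-4 * t / C) = r ^ 2 := by rw [← exp_nat_mul]; ring_nf
  have hrt : r ^ 2 * exp (4 / C * t) = 1 := by rw [← hr2, ← exp_add]; ring_nf; exact exp_zero
  have h1r : 0 < 1 - r ^ 2 := by nlinarith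
  have hq0 : 0 < a * (1 - r ^ 2) / (a + r * b) := by positivity
  have hp0 : 0 < b * (1 - r ^ 2) / (r * a + b) := by positivity
  have hq1 : a * (1 - r ^ 2) / (a + r * b) < 1 := by
    rw [div_lt_one (by positivity)]; nlinarith [mul_pos hr0 hb]
  have hp1 : b * (1 - r ^ 2) / (r * a + b) < 1 := by
    rw [div_lt_one (by positivity)]; nlinarith [mul_pos hr0 ha]
  have hpq : (1 - b * (1 - r ^ 2) / (r * a + b)) * (1 - a * (1 - r ^ 2) / (a + r * b)) = r ^ 2 := by
    field_simp
    ring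
  have hpqt := hpq ▸ hrt
  have := hL.exp_log_div_add_log_div_le_pexp_mul_heat hμ hμ1 hC hLS (hA ▸ exp_pos _)
    (hB ▸ exp_pos _) hp0 hp1 hq0 hq1 hpqt
  rw [hA, hB, log_exp, log_exp] at this
  convert this using 2
  rw [hr2]
  field_simp
  ring

end Mixing

/-- mixing bound for big sets under the `1`-logSob inequality. -/
theorem mixing_big_sets [DecidableEq Ω] [Fintype Ω] (μ : Ω → ℝ)
    (hμpos : ∀ ω, 0 < μ ω) (hμ1 : ∑ ω, μ ω = 1)
    (L : (Ω → ℝ) →ₗ[ℝ] (Ω → ℝ)) (hL : IsGen μ L)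
    (C : ℝ) (hC : 0 < C) (hLS : LogSob μ L 1 C)
    (a b : ℝ) (ha : 0 ≤ a) (hb : 0 ≤ b) (t : ℝ) (ht : 0 < t)
    (A B : Finset Ω)
    (hA : ∑ ω ∈ A, μ ω = Real.exp (-(a ^ 2) / 2))
    (hB : ∑ ω ∈ B, μ ω = Real.exp (-(b ^ 2) / 2)) :
    Real.exp (-(1 / 2) * ((a ^ 2 + 2 * Real.exp (-2 * t / C) * a * b + b ^ 2) /
        (1 - Real.exp (-4 * t / C)))) ≤
      pexp μ (fun ω => (if ω ∈ A then (1 : ℝ) else 0) *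
        heat L t (fun ω' => if ω' ∈ B then (1 : ℝ) else 0) ω) := by
  have hden : 0 < 1 - exp (-4 * t / C) ∧ 1 - exp (-4 * t / C) ≤ 1 :=
    ⟨sub_pos.2 (exp_lt_one_iff.2 (div_neg_of_neg_of_pos (by linarith) hC)),
      sub_le_self _ (exp_pos _).le⟩
  have hle : ∀ x, 0 ≤ x → -(1 / 2) * (x / (1 - exp (-4 * t / C))) ≤ -x / 2 := fun x hx => by
    have := div_le_div_of_nonneg_left hx hden.1 hden.2
    rw [div_one] at this
    linarith
  rcases ha.eq_or_lt with rfl | ha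
  · have hAu := eq_univ_of_sum_eq_one hμpos hμ1 (by simpa using hA)
    simp only [hAu, mem_univ, if_true, one_mul]
    rw [hL.pexp_heat, pexp_indicator, hB]
    exact exp_le_exp.2 (by simpa using hle (b ^ 2) (sq_nonneg b))
  rcases hb.eq_or_lt with rfl | hb
  · have hBu := eq_univ_of_sum_eq_one hμpos hμ1 (by simpa using hB)
    simp only [hBu, mem_univ, if_true, hL.heat_const, mul_one]
    rw [pexp_indicator, hA]
    exact exp_le_exp.2 (by simpa using hle (a ^ 2) (sq_nonneg a))
  exact hL.mixing_of_pos hμpos hμ1 hC hLS ha hb ht hA hB
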